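/- arXiv:2409.16357 — 4 statements merged into one kernel-verified Lean document; each statement's English description precedes it below -/
import Mathlib

section
/- If Γ is a finite abelian group of odd order and Q : Γ → ℂˣ is a quadratic form, then there exists a unique quadratic form q : Γ → ℂˣ with q(a)² = Q(a) for all a ∈ Γ. -/
/-- The bimultiplicative form `B_Q` associated with `Q : Γ → ℂˣ`. -/
def assocForm {Γ : Type*} [AddCommGroup Γ] (Q : Γ → ℂˣ) (a b : Γ) : ℂˣ :=
  Q (a + b) * (Q a)⁻¹ * (Q b)⁻¹

/-- A map `B : Γ × Γ → ℂˣ` is bimultiplicative. -/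
def IsBimult {Γ : Type*} [AddCommGroup Γ] (B : Γ → Γ → ℂˣ) : Prop :=
  (∀ a b c : Γ, B (a + b) c = B a c * B b c) ∧
  (∀ a b c : Γ, B a (b + c) = B a b * B a c)

/-- `Q : Γ → ℂˣ` is a quadratic form: `Q(na) = Q(a)^(n²)` and `B_Q` is bimultiplicative. -/
def IsQuadraticForm {Γ : Type*} [AddCommGroup Γ] (Q : Γ → ℂˣ) : Prop :=
  (∀ (n : ℤ) (a : Γ), Q (n • a) = Q a ^ (n ^ 2)) ∧ IsBimult (assocForm Q)

lemma qf_pow_card_sq {Γ : Type*} [AddCommGroup Γ] [Fintype Γ]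
    (Q : Γ → ℂˣ) (hQ : IsQuadraticForm Q) (a : Γ) :
    Q a ^ ((Fintype.card Γ : ℤ) ^ 2) = 1 := by
  have h0 : Q 0 = 1 := by
    have := hQ.1 0 0
    simpa using this
  have hN : (Fintype.card Γ : ℤ) • a = 0 := by
    rw [natCast_zsmul]; exact card_nsmul_eq_zero
  have := hQ.1 (Fintype.card Γ : ℤ) a
  rw [hN, h0] at this
  exact this.symm

/-- If `Γ` is a finite abelian group of odd order and `Q : Γ → ℂˣ` is a quadratic form,
then there exists a unique quadratic form `q` with `q(a)² = Q(a)` for all `a`. -/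
theorem odd_order_unique_quadratic_sqrt
    (Γ : Type*) [AddCommGroup Γ] [Fintype Γ]
    (hodd : Odd (Fintype.card Γ))
    (Q : Γ → ℂˣ) (hQ : IsQuadraticForm Q) :
    ∃! q : Γ → ℂˣ, IsQuadraticForm q ∧ ∀ a : Γ, q a ^ 2 = Q a := by
  set N : ℤ := (Fintype.card Γ : ℤ) with hNdef
  have hModd : Odd (N ^ 2) := by simpa using (hodd.pow (n := 2)).natCast (R := ℤ)
  obtain ⟨k, hk⟩ := hModd
  -- m := k + 1 satisfies 2*m = N^2 + 1
  set m : ℤ := k + 1 with hmdef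
  have h2m : 2 * m = N ^ 2 + 1 := by omega
  -- key: for any q that is a quadratic form, q a ^ (2*m) = q a
  have key : ∀ (q : Γ → ℂˣ), IsQuadraticForm q → ∀ a, q a ^ (2 * m) = q a := by
    intro q hq a
    rw [h2m, zpow_add, zpow_one, qf_pow_card_sq q hq a, one_mul]
  refine ⟨fun a => Q a ^ m, ⟨⟨?_, ?_, ?_⟩, ?_⟩, ?_⟩
  · intro n a
    show Q (n • a) ^ m = (Q a ^ m) ^ (n:ℤ) ^ 2
    rw [hQ.1 n a, ← zpow_mul, ← zpow_mul, mul_comm]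
  · intro a b c
    have := hQ.2.1 a b c
    simp only [assocForm] at this ⊢
    simp only [← inv_zpow, ← mul_zpow, this]
  · intro a b c
    have := hQ.2.2 a b c
    simp only [assocForm] at this ⊢
    simp only [← inv_zpow, ← mul_zpow, this]
  · intro a
    have := key Q hQ a
    rw [← zpow_natCast (Q a ^ m), ← zpow_mul]
    simpa [mul_comm] using this
  · intro q ⟨hq, hq2⟩
    funext a
    have h1 : q a ^ (2 * m) = q a := key q hq a
    have : (q a ^ 2) ^ m = q a := by rw [← zpow_natCast (q a), ← zpow_mul] ; simpa using h1
    rw [hq2 a] at this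
    exact this.symm
end

section
/- Let Γ be a finite abelian group and σ, ω functions with σ : Γ×Γ → ℂˣ, ω : Γ×Γ×Γ → ℂˣ satisfying the abelian 3-cocycle (hexagon) equations: ω(b,a,c)/(ω(a,b,c)ω(b,c,a)) = σ(a,b+c)/(σ(a,b)σ(a,c)) and ω(a,b,c)ω(c,a,b)/ω(a,c,b) = σ(a+b,c)/(σ(a,c)σ(b,c)) for all a,b,c ∈ Γ, with ω also a 3-cocycle. Then the diagonal map Q(a) := σ(a,a) satisfies Q(-a) = Q(a) for all a ∈ Γ. -/
/-- For an abelian 3-cocycle `(σ,ω)` on a finite abelian group `Γ` (with `ω` a normalized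
3-cocycle and the two hexagon equations), the quadratic form `Q(a) = σ(a,a)` satisfies
`Q(-a) = Q(a)`. -/
theorem abelian_three_cocycle_diag_neg
    (Γ : Type*) [AddCommGroup Γ] [Fintype Γ]
    (σ : Γ → Γ → ℂˣ) (ω : Γ → Γ → Γ → ℂˣ)
    (hcoc : ∀ a b c d : Γ,
      ω b c d * ω a (b + c) d * ω a b c = ω (a + b) c d * ω a b (c + d))
    (hnorm : ∀ a b : Γ, ω 0 a b = 1 ∧ ω a 0 b = 1 ∧ ω a b 0 = 1)
    (hhex1 : ∀ a b c : Γ,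
      ω b a c * (ω a b c * ω b c a)⁻¹ = σ a (b + c) * (σ a b * σ a c)⁻¹)
    (hhex2 : ∀ a b c : Γ,
      ω a b c * ω c a b * (ω a c b)⁻¹ = σ (a + b) c * (σ a c * σ b c)⁻¹) :
    ∀ a : Γ, σ (-a) (-a) = σ a a := by
  -- σ is normalized: σ b 0 = 1
  have hσr : ∀ b : Γ, σ b 0 = 1 := by
    intro b
    have h := hhex1 b 0 0
    rw [(hnorm b 0).1, (hnorm b 0).2.1, (hnorm 0 b).2.1, add_zero] at h
    have h' : (1 : ℂˣ) = (σ b 0)⁻¹ := by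
      calc (1 : ℂˣ) = 1 * (1 * 1)⁻¹ := by group
        _ = σ b 0 * (σ b 0 * σ b 0)⁻¹ := h
        _ = (σ b 0)⁻¹ := by group
    rw [eq_comm, inv_eq_one] at h'
    exact h'
  -- σ is normalized: σ 0 b = 1
  have hσl : ∀ b : Γ, σ 0 b = 1 := by
    intro b
    have h := hhex2 0 0 b
    rw [(hnorm 0 b).1, (hnorm b 0).2.1, (hnorm b 0).1, zero_add] at h
    have h' : (1 : ℂˣ) = (σ 0 b)⁻¹ := by
      calc (1 : ℂˣ) = 1 * 1 * 1⁻¹ := by group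
        _ = σ 0 b * (σ 0 b * σ 0 b)⁻¹ := h
        _ = (σ 0 b)⁻¹ := by group
    rw [eq_comm, inv_eq_one] at h'
    exact h'
  intro a
  -- (6): ω a (-a) a = (σ a a * σ (-a) a)⁻¹
  have h6 : ω a (-a) a = (σ a a * σ (-a) a)⁻¹ := by
    have h := hhex2 a (-a) a
    rw [add_neg_cancel, hσl a, one_mul] at h
    calc ω a (-a) a = ω a (-a) a * ω a a (-a) * (ω a a (-a))⁻¹ := by group
      _ = (σ a a * σ (-a) a)⁻¹ := h
  -- (4): ω (-a) a (-a) = σ (-a) a * σ (-a) (-a)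
  have h4 : ω (-a) a (-a) = σ (-a) a * σ (-a) (-a) := by
    have h := hhex1 (-a) a (-a)
    rw [add_neg_cancel, hσr (-a), one_mul] at h
    have h' : (ω (-a) a (-a))⁻¹ = (σ (-a) a * σ (-a) (-a))⁻¹ := by
      calc (ω (-a) a (-a))⁻¹
          = ω a (-a) (-a) * (ω (-a) a (-a) * ω a (-a) (-a))⁻¹ := by group
        _ = (σ (-a) a * σ (-a) (-a))⁻¹ := h
    exact inv_injective h'
  -- (D): ω (-a) a (-a) * ω a (-a) a = 1
  have hD : ω (-a) a (-a) * ω a (-a) a = 1 := by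
    have h := hcoc a (-a) a (-a)
    rw [neg_add_cancel, add_neg_cancel, (hnorm a (-a)).2.1, (hnorm a (-a)).1,
      (hnorm a (-a)).2.2] at h
    calc ω (-a) a (-a) * ω a (-a) a = ω (-a) a (-a) * 1 * ω a (-a) a := by group
      _ = 1 * 1 := h
      _ = 1 := by group
  -- combine: σ (-a) a * σ (-a) (-a) = σ a a * σ (-a) a, cancel σ (-a) a
  rw [h4, h6] at hD
  have key : σ (-a) a * σ (-a) (-a) = σ a a * σ (-a) a := by
    have := mul_eq_one_iff_eq_inv.mp hD
    rw [inv_inv] at this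
    rw [this, mul_comm]
  have := mul_left_cancel (a := σ (-a) a)
    (b := σ (-a) (-a)) (c := σ a a) (by rw [key, mul_comm])
  exact this
end

section
/- Let ({\bar Γ}, {\bar σ}) with {\bar σ} : {\bar Γ}×{\bar Γ} → ℂˣ bimultiplicative and symmetric, I ⊆ {\bar Γ} a subgroup with {\bar σ}(i,j)=1 for all i,j ∈ I, coset representatives â for a ∈ {\bar Γ}/I with associated 2-cocycle u(a,b) = â+b̂−(a+b)^ ∈ I, and ε : I × I → ℂˣ a 2-cocycle with ε(i,j)ε(j,i)⁻¹ = {\bar σ}(i,j). Then ω(a,b,c) := {\bar σ}(â, u(b,c)) · ε(u(b,c), u(a,b+c)) / ε(u(a,b), u(a+b,c)) defines a 3-cocycle on {\bar Γ}/I with values in ℂˣ. -/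
theorem eps_identity_aux {Γ : Type*} [AddCommGroup Γ] (ε : Γ → Γ → ℂˣ)
    (hcoc : ∀ i j k : Γ, ε i j * ε (i + j) k = ε j k * ε i (j + k))
    (hsym : ∀ i j : Γ, ε i j = ε j i)
    (A B C P Q R S T U V : Γ)
    (h1 : B + R = A + P) (h2 : C + S = B + Q) (h3 : Q + U = R + T)
    (h4 : C + V = P + T) (h5 : A + V = S + U) :
    ε C S * ε Q U * ε B R * ε P T * ε A V
      = ε B Q * ε R T * ε A P * ε C V * ε S U := by
  have h0 : ∀ x : Γ, ε 0 x = ε 0 0 := by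
    intro x
    have h := hcoc 0 0 x
    rw [zero_add, zero_add] at h
    exact (mul_right_cancel h).symm
  letI : CommMonoid (Γ × ℂˣ) :=
  { mul := fun p q => (p.1 + q.1, p.2 * q.2 * ε p.1 q.1)
    one := (0, (ε 0 0)⁻¹)
    mul_assoc := by
      rintro ⟨x, s⟩ ⟨y, t⟩ ⟨z, w⟩
      refine Prod.ext (add_assoc x y z) ?_
      show s * t * ε x y * w * ε (x + y) z = s * (t * w * ε y z) * ε x (y + z)
      have e1 : s * t * ε x y * w * ε (x + y) z
          = s * t * w * (ε x y * ε (x + y) z) := by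
        simp only [mul_comm, mul_assoc, mul_left_comm]
      have e2 : s * (t * w * ε y z) * ε x (y + z)
          = s * t * w * (ε y z * ε x (y + z)) := by
        simp only [mul_comm, mul_assoc, mul_left_comm]
      rw [e1, e2, hcoc]
    mul_comm := by
      rintro ⟨x, s⟩ ⟨y, t⟩
      refine Prod.ext (add_comm x y) ?_
      show s * t * ε x y = t * s * ε y x
      rw [hsym x y, mul_comm s t]
    one_mul := by
      rintro ⟨x, s⟩
      refine Prod.ext (zero_add x) ?_
      show (ε 0 0)⁻¹ * s * ε 0 x = s
      rw [h0 x, mul_comm ((ε 0 0)⁻¹) s, mul_assoc, inv_mul_cancel, mul_one]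
    mul_one := by
      rintro ⟨x, s⟩
      refine Prod.ext (add_zero x) ?_
      show s * (ε 0 0)⁻¹ * ε x 0 = s
      rw [hsym x 0, h0 x, mul_assoc, inv_mul_cancel, mul_one] }
  set l : Γ → Γ × ℂˣ := fun x => (x, 1) with hl
  have master : (l C * l S) * (l Q * l U) * (l B * l R) * (l P * l T) * (l A * l V)
      = (l B * l Q) * (l R * l T) * (l A * l P) * (l C * l V) * (l S * l U) := by
    simp only [mul_comm, mul_assoc, mul_left_comm]
  have hsnd : ∀ p q : Γ × ℂˣ, (p * q).2 = p.2 * q.2 * ε p.1 q.1 := fun _ _ => rfl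
  have hfst : ∀ p q : Γ × ℂˣ, (p * q).1 = p.1 + q.1 := fun _ _ => rfl
  have key := congrArg Prod.snd master
  simp only [hsnd, hfst, hl, one_mul, mul_one] at key
  rw [← h1, ← h2, ← h3, ← h4, ← h5] at key
  have keyC := congrArg (Units.val) key
  push_cast at keyC
  have hXne : ((ε (C + S) (Q + U) : ℂˣ) : ℂ) * ((ε (C + S + (Q + U)) (B + R) : ℂˣ) : ℂ)
      * ((ε (C + S + (Q + U) + (B + R)) (C + V) : ℂˣ) : ℂ)
      * ((ε (C + S + (Q + U) + (B + R) + (C + V)) (A + V) : ℂˣ) : ℂ) ≠ 0 := by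
    exact mul_ne_zero (mul_ne_zero (mul_ne_zero (Units.ne_zero _) (Units.ne_zero _))
      (Units.ne_zero _)) (Units.ne_zero _)
  rw [Units.ext_iff]
  push_cast
  exact mul_right_cancel₀ hXne (by linear_combination keyC)

/-- Given a symmetric bimultiplicative `σ̄` on `Γ̄`, a subgroup `I` with `σ̄ = 1` on `I × I`,
coset representatives with 2-cocycle `u`, and a 2-cocycle `ε` on `I` whose skew form is `σ̄`,
the formula `ω(a,b,c) = σ̄(â, u(b,c)) ε(u(b,c), u(a,b+c)) ε(u(a,b), u(a+b,c))⁻¹` defines a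
3-cocycle on `Γ̄/I`. -/
theorem condensation_associator_is_three_cocycle
    (Γb : Type*) [AddCommGroup Γb]
    (σ : Γb → Γb → ℂˣ)
    (hbi1 : ∀ a b c : Γb, σ (a + b) c = σ a c * σ b c)
    (hbi2 : ∀ a b c : Γb, σ a (b + c) = σ a b * σ a c)
    (hsymm : ∀ a b : Γb, σ a b = σ b a)
    (I : AddSubgroup Γb)
    (hII : ∀ i ∈ I, ∀ j ∈ I, σ i j = 1)
    (rep : Γb ⧸ I → Γb)
    (hrep : ∀ a : Γb ⧸ I, (QuotientAddGroup.mk (rep a) : Γb ⧸ I) = a)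
    (hrep0 : rep 0 = 0)
    (ε : Γb → Γb → ℂˣ)
    (hεcoc : ∀ i ∈ I, ∀ j ∈ I, ∀ k ∈ I, ε i j * ε (i + j) k = ε j k * ε i (j + k))
    (hεskew : ∀ i ∈ I, ∀ j ∈ I, ε i j * (ε j i)⁻¹ = σ i j) :
    let u : Γb ⧸ I → Γb ⧸ I → Γb := fun a b => rep a + rep b - rep (a + b)
    let ω : Γb ⧸ I → Γb ⧸ I → Γb ⧸ I → ℂˣ := fun a b c =>
      σ (rep a) (u b c) * ε (u b c) (u a (b + c)) * (ε (u a b) (u (a + b) c))⁻¹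
    ∀ a b c d : Γb ⧸ I,
      ω b c d * ω a (b + c) d * ω a b c = ω (a + b) c d * ω a b (c + d) := by
  intro u ω a b c d
  have hu : ∀ x y : Γb ⧸ I, rep x + rep y - rep (x + y) ∈ I := by
    intro x y
    refine (QuotientAddGroup.eq_zero_iff _).mp ?_
    have : ((rep x + rep y - rep (x + y) : Γb) : Γb ⧸ I)
        = ((rep x : Γb ⧸ I) + (rep y : Γb ⧸ I)) - ((rep (x + y) : Γb) : Γb ⧸ I) := rfl
    rw [this, hrep, hrep, hrep]
    abel
  simp only [u, ω]
  simp only [add_assoc]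
  -- memberships, stated in assoc-normal form
  have hAI : rep a + rep b - rep (a + b) ∈ I := hu a b
  have hBI : rep b + rep c - rep (b + c) ∈ I := hu b c
  have hCI : rep c + rep d - rep (c + d) ∈ I := hu c d
  have hPI : rep (a + b) + rep c - rep (a + (b + c)) ∈ I := by
    have := hu (a + b) c; simp only [add_assoc] at this; exact this
  have hQI : rep (b + c) + rep d - rep (b + (c + d)) ∈ I := by
    have := hu (b + c) d; simp only [add_assoc] at this; exact this
  have hRI : rep a + rep (b + c) - rep (a + (b + c)) ∈ I := hu a (b + c)
  have hSI : rep b + rep (c + d) - rep (b + (c + d)) ∈ I := hu b (c + d)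
  have hTI : rep (a + (b + c)) + rep d - rep (a + (b + (c + d))) ∈ I := by
    have := hu (a + (b + c)) d; simp only [add_assoc] at this; exact this
  have hUI : rep a + rep (b + (c + d)) - rep (a + (b + (c + d))) ∈ I := hu a (b + (c + d))
  have hVI : rep (a + b) + rep (c + d) - rep (a + (b + (c + d))) ∈ I := by
    have := hu (a + b) (c + d); simp only [add_assoc] at this; exact this
  set A := rep a + rep b - rep (a + b) with hA
  set B := rep b + rep c - rep (b + c) with hB
  set C := rep c + rep d - rep (c + d) with hC
  set P := rep (a + b) + rep c - rep (a + (b + c)) with hP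
  set Q := rep (b + c) + rep d - rep (b + (c + d)) with hQ
  set R := rep a + rep (b + c) - rep (a + (b + c)) with hR
  set S := rep b + rep (c + d) - rep (b + (c + d)) with hS
  set T := rep (a + (b + c)) + rep d - rep (a + (b + (c + d))) with hT
  set U := rep a + rep (b + (c + d)) - rep (a + (b + (c + d))) with hU
  set V := rep (a + b) + rep (c + d) - rep (a + (b + (c + d))) with hV
  have hsymI : ∀ i ∈ I, ∀ j ∈ I, ε i j = ε j i := by
    intro i hi j hj
    have h := hεskew i hi j hj
    rw [hII i hi j hj] at h
    exact mul_inv_eq_one.mp h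
  have Hε := eps_identity_aux (Γ := ↥I) (fun i j => ε i j)
    (fun i j k => hεcoc i i.2 j j.2 k k.2)
    (fun i j => hsymI i i.2 j j.2)
    ⟨A, hAI⟩ ⟨B, hBI⟩ ⟨C, hCI⟩ ⟨P, hPI⟩ ⟨Q, hQI⟩ ⟨R, hRI⟩ ⟨S, hSI⟩ ⟨T, hTI⟩ ⟨U, hUI⟩ ⟨V, hVI⟩
    (Subtype.ext (show B + R = A + P by rw [hA, hB, hP, hR]; abel))
    (Subtype.ext (show C + S = B + Q by rw [hB, hC, hQ, hS]; abel))
    (Subtype.ext (show Q + U = R + T by rw [hQ, hR, hT, hU]; abel))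
    (Subtype.ext (show C + V = P + T by rw [hC, hP, hT, hV]; abel))
    (Subtype.ext (show A + V = S + U by rw [hA, hS, hU, hV]; abel))
  simp only at Hε
  have hσ1 : σ (rep (a + b)) C = σ (rep a) C * σ (rep b) C := by
    have e : rep a + rep b = rep (a + b) + A := by rw [hA]; abel
    calc σ (rep (a + b)) C = σ (rep (a + b)) C * σ A C := by
          rw [hII A hAI C hCI, mul_one]
      _ = σ (rep (a + b) + A) C := (hbi1 _ _ _).symm
      _ = σ (rep a + rep b) C := by rw [← e]
      _ = σ (rep a) C * σ (rep b) C := hbi1 _ _ _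
  have hσ2 : σ (rep a) S * σ (rep a) C = σ (rep a) B * σ (rep a) Q := by
    have e : B + Q = S + C := by rw [hB, hQ, hS, hC]; abel
    calc σ (rep a) S * σ (rep a) C = σ (rep a) (S + C) := (hbi2 _ _ _).symm
      _ = σ (rep a) (B + Q) := by rw [e]
      _ = σ (rep a) B * σ (rep a) Q := hbi2 _ _ _
  have HεC := congrArg Units.val Hε
  push_cast at HεC
  have h1C := congrArg Units.val hσ1
  push_cast at h1C
  have h2C := congrArg Units.val hσ2
  push_cast at h2C
  rw [Units.ext_iff]
  push_cast
  have n1 : ((ε B Q : ℂˣ) : ℂ) ≠ 0 := Units.ne_zero _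
  have n2 : ((ε R T : ℂˣ) : ℂ) ≠ 0 := Units.ne_zero _
  have n3 : ((ε A P : ℂˣ) : ℂ) ≠ 0 := Units.ne_zero _
  have n4 : ((ε P T : ℂˣ) : ℂ) ≠ 0 := Units.ne_zero _
  have n5 : ((ε A V : ℂˣ) : ℂ) ≠ 0 := Units.ne_zero _
  field_simp
  linear_combination ((σ (rep b) C : ℂˣ) : ℂ) * ((σ (rep a) Q : ℂˣ) : ℂ)
      * ((σ (rep a) B : ℂˣ) : ℂ) * HεC
    - ((ε B Q : ℂˣ) : ℂ) * ((ε R T : ℂˣ) : ℂ) * ((ε A P : ℂˣ) : ℂ) * ((ε C V : ℂˣ) : ℂ)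
      * ((ε S U : ℂˣ) : ℂ) * ((σ (rep b) C : ℂˣ) : ℂ) * h2C
    - ((ε B Q : ℂˣ) : ℂ) * ((ε R T : ℂˣ) : ℂ) * ((ε A P : ℂˣ) : ℂ) * ((ε C V : ℂˣ) : ℂ)
      * ((ε S U : ℂˣ) : ℂ) * ((σ (rep a) S : ℂˣ) : ℂ) * h1C
end

section
/- Let q : Γ → ℂˣ be a nondegenerate quadratic form on a finite abelian group Γ with associated nondegenerate bimultiplicative form B_q. Then |Σ_{a∈Γ} q(a)|² = |Γ|. -/
/-!
Since `q (n • a) = q a ^ n²`, every `q a` is a root of unity, so `conj (q a) = (q a)⁻¹`.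
Expanding `|Σ q|²` and writing `q (c + b) (q b)⁻¹ = B_q(c, b) q c` gives
`Σ_c q c · Σ_b B_q(c, b)`. For `c ≠ 0` the inner sum is that of the nontrivial character
`B_q(c, ·)` (nondegeneracy), hence zero; only `c = 0` survives, contributing `q 0 · |Γ| = |Γ|`.
-/

open Finset ComplexConjugate

section

variable {Γ : Type*} [AddCommGroup Γ]

lemma assocForm_mul_mul (Q : Γ → ℂˣ) (a b : Γ) : assocForm Q a b * Q a * Q b = Q (a + b) := by
  rw [assocForm, mul_right_comm _ _ (Q a), inv_mul_cancel_right, inv_mul_cancel_right]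

namespace IsBimult

variable {B : Γ → Γ → ℂˣ}

lemma apply_zero_left (hB : IsBimult B) (b : Γ) : B 0 b = 1 :=
  mul_eq_left.mp (by rw [← hB.1, zero_add])

lemma apply_zero_right (hB : IsBimult B) (a : Γ) : B a 0 = 1 :=
  mul_eq_left.mp (by rw [← hB.2, zero_add])

def addCharRight (hB : IsBimult B) (a : Γ) : AddChar Γ ℂ where
  toFun b := B a b
  map_zero_eq_one' := by rw [hB.apply_zero_right]; rfl
  map_add_eq_mul' b c := by rw [hB.2, Units.val_mul]

lemma sum_apply_right_eq_ite [Fintype Γ] [DecidableEq Γ] (hB : IsBimult B)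
    (hnd : ∀ a : Γ, (∀ b : Γ, B a b = 1) → a = 0) (a : Γ) :
    ∑ b, (B a b : ℂ) = if a = 0 then (Fintype.card Γ : ℂ) else 0 := by
  split_ifs with ha
  · simp [ha, hB.apply_zero_left]
  · refine (AddChar.sum_eq_zero_iff_ne_zero (ψ := hB.addCharRight a)).mpr ?_
    rw [AddChar.ne_zero_iff]
    obtain ⟨b, hb⟩ : ∃ b, B a b ≠ 1 := by
      by_contra! h
      exact ha (hnd a h)
    exact ⟨b, fun h => hb (Units.val_eq_one.mp h)⟩

end IsBimult

namespace IsQuadraticForm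

variable {q : Γ → ℂˣ}

lemma map_zero (hq : IsQuadraticForm q) : q 0 = 1 := by
  simpa using hq.1 0 0

lemma norm_eq_one [Finite Γ] (hq : IsQuadraticForm q) (a : Γ) : ‖(q a : ℂ)‖ = 1 := by
  have hpow : q a ^ (Nat.card Γ ^ 2) = 1 := by
    have h := hq.1 (Nat.card Γ) a
    rw [natCast_zsmul, card_nsmul_eq_zero', hq.map_zero] at h
    exact_mod_cast h.symm
  exact Complex.norm_eq_one_of_pow_eq_one (by rw [← Units.val_pow_eq_pow_val, hpow, Units.val_one])
    (pow_ne_zero 2 Nat.card_pos.ne')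

end IsQuadraticForm

lemma sum_mul_conj_sum_eq_sum_mul_sum_assocForm [Fintype Γ] {Q : Γ → ℂˣ}
    (hQ : ∀ a, ‖(Q a : ℂ)‖ = 1) :
    (∑ a, (Q a : ℂ)) * conj (∑ a, (Q a : ℂ)) = ∑ c, (Q c : ℂ) * ∑ b, (assocForm Q c b : ℂ) := by
  have hconj (a : Γ) : conj (Q a : ℂ) = (Q a : ℂ)⁻¹ := (Complex.inv_eq_conj (hQ a)).symm
  calc (∑ a, (Q a : ℂ)) * conj (∑ a, (Q a : ℂ))
      = ∑ b, ∑ a, (Q a : ℂ) * (Q b : ℂ)⁻¹ := by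
        rw [map_sum, sum_mul_sum, sum_comm]
        simp only [hconj]
    _ = ∑ b, ∑ c, (Q (c + b) : ℂ) * (Q b : ℂ)⁻¹ := by
        refine sum_congr rfl fun b _ => ?_
        exact (Fintype.sum_equiv (Equiv.addRight b) _ _ fun c => rfl).symm
    _ = ∑ c, (Q c : ℂ) * ∑ b, (assocForm Q c b : ℂ) := by
        rw [sum_comm]
        refine sum_congr rfl fun c _ => ?_
        rw [mul_sum]
        refine sum_congr rfl fun b _ => ?_
        rw [← assocForm_mul_mul Q c b, Units.val_mul, Units.val_mul]
        field_simp

end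

/-- For a nondegenerate quadratic form `q` on a finite abelian group `Γ`,
`|Σ_{a∈Γ} q(a)|² = |Γ|`. -/
theorem gauss_sum_abs_sq_eq_card
    (Γ : Type*) [AddCommGroup Γ] [Fintype Γ]
    (q : Γ → ℂˣ) (hq : IsQuadraticForm q)
    (hnd : ∀ a : Γ, (∀ b : Γ, assocForm q a b = 1) → a = 0) :
    ‖∑ a : Γ, (q a : ℂ)‖ ^ 2 = Fintype.card Γ := by
  classical
  have h := sum_mul_conj_sum_eq_sum_mul_sum_assocForm hq.norm_eq_one
  simp only [Complex.mul_conj', hq.2.sum_apply_right_eq_ite hnd, mul_ite, mul_zero,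
    sum_ite_eq', mem_univ, if_true, hq.map_zero, Units.val_one, one_mul] at h
  exact_mod_cast h
end
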